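/- arXiv:2511.00226 — 3 statements merged into one kernel-verified Lean document; each statement's English description precedes it below -/
import Mathlib

section
/- Let V be a real Hilbert space and let F ⊆ V be a compact subset. Let (f_n)_{n≥1} be a sequence in F generated by the (strong) greedy algorithm: writing P_n for the orthogonal projection of V onto span{f_1, …, f_n} (with P_0 = 0) and σ_n(F) := sup_{f∈F} ‖f − P_n f‖, assume that for every n ≥ 0 the next element satisfies ‖f_{n+1} − P_n f_{n+1}‖ = σ_n(F). Then for every N ≥ 1, σ_N(F) ≤ (2^{N+1}/√3) · d_N(F). -/
/-! Gram–Schmidt applied to the greedy snapshots `f_1, f_2, …` gives orthonormal directions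
`b_0, b_1, …` in which the snapshots have a lower triangular coordinate matrix: the diagonal
entries are the greedy errors `σ_i`, and the entry of `f_{i+1}` along `b_j` is bounded by `σ_j`.
Suppose every element of `F` lies within `D` of a subspace `W` of dimension `N`. Some unit vector
`u = ∑_{j ≤ N} c_j b_j` is orthogonal to `W`, so `|⟪f_{i+1}, u⟫| ≤ D` for `i ≤ N`. Solving the
triangular system for `c` gives `σ_i |c_i| ≤ 2^i D`, and `∑ c_j² = 1` together with the
monotonicity of `σ` yields `σ_N² ≤ ∑_{j ≤ N} 4^j D² ≤ 4^{N+1} D² / 3`. -/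

variable {V : Type*} [NormedAddCommGroup V] [InnerProductSpace ℝ V] [CompleteSpace V]

/-- The Kolmogorov `N`-width of a subset `F` of a real Hilbert space:
the infimum, over all linear subspaces `W` with `dim W ≤ N`, of `sup_{f ∈ F} inf_{w ∈ W} ‖f - w‖`. -/
noncomputable def kolmogorovWidth (F : Set V) (N : ℕ) : ℝ :=
  sInf {r : ℝ | ∃ W : Submodule ℝ V, Module.rank ℝ W ≤ N ∧
    ∀ f ∈ F, Metric.infDist f (W : Set V) ≤ r}

/-- The space spanned by the greedy snapshots `f_1, …, f_n` (for `n = 0` this is `⊥`). -/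
noncomputable def greedySpace (f : ℕ → V) (n : ℕ) : Submodule ℝ V :=
  Submodule.span ℝ (f '' Set.Icc 1 n)

instance (f : ℕ → V) (n : ℕ) : FiniteDimensional ℝ (greedySpace f n) :=
  FiniteDimensional.span_of_finite ℝ ((Set.finite_Icc 1 n).image f)

/-- The greedy approximation error `σ_n(F) = sup_{f ∈ F} ‖f - P_n f‖`, where `P_n` is the
orthogonal projection onto the span of the first `n` greedy snapshots (`P_0 = 0`). -/
noncomputable def greedyError (F : Set V) (f : ℕ → V) (n : ℕ) : ℝ :=
  ⨆ g : F, ‖(g : V) - ((greedySpace f n).orthogonalProjectionOnto (g : V) : V)‖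

open Finset Metric
open scoped RealInnerProductSpace

lemma mul_abs_le_two_pow_mul_of_lowerTriangular {N : ℕ} {σ c : ℕ → ℝ} {a : ℕ → ℕ → ℝ} {D : ℝ}
    (hdiag : ∀ i ≤ N, a i i = σ i) (hlower : ∀ i ≤ N, ∀ j < i, |a i j| ≤ σ j)
    (hupper : ∀ i j, i < j → a i j = 0)
    (hsum : ∀ i ≤ N, |∑ j ∈ range (N + 1), c j * a i j| ≤ D) :
    ∀ i ≤ N, σ i * |c i| ≤ 2 ^ i * D := by
  intro i
  induction i using Nat.strong_induction_on with
  | _ i ih =>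
    intro hi
    have hsplit : ∑ j ∈ range (N + 1), c j * a i j =
        ∑ j ∈ range i, c j * a i j + c i * a i i := by
      rw [← sum_range_succ]
      refine (sum_subset (range_subset_range.mpr (by omega)) fun j _ hj => ?_).symm
      rw [hupper i j (by simpa using hj), mul_zero]
    have hprev : |∑ j ∈ range i, c j * a i j| ≤ ∑ j ∈ range i, 2 ^ j * D := by
      refine (abs_sum_le_sum_abs _ _).trans (sum_le_sum fun j hj => ?_)
      have hj : j < i := mem_range.mp hj
      calc |c j * a i j| ≤ σ j * |c j| := by
            rw [abs_mul, mul_comm]; gcongr; exact hlower i hi j hj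
        _ ≤ 2 ^ j * D := ih j hj (by omega)
    calc σ i * |c i| ≤ |c i * a i i| := by
          rw [abs_mul, hdiag i hi, mul_comm]; gcongr; exact le_abs_self _
      _ ≤ |∑ j ∈ range (N + 1), c j * a i j| + |∑ j ∈ range i, c j * a i j| := by
          have h := abs_sub (∑ j ∈ range i, c j * a i j + c i * a i i) (∑ j ∈ range i, c j * a i j)
          rwa [add_sub_cancel_left, ← hsplit] at h
      _ ≤ D + ∑ j ∈ range i, 2 ^ j * D := add_le_add (hsum i hi) hprev
      _ = 2 ^ i * D := by
          rw [← sum_mul, geom_sum_eq (by norm_num : (2 : ℝ) ≠ 1)]; ring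

lemma le_two_pow_div_sqrt_three_mul {N : ℕ} {σ c : ℕ → ℝ} {D : ℝ} (hσN : 0 ≤ σ N) (hD : 0 ≤ D)
    (hanti : ∀ j ≤ N, σ N ≤ σ j) (hc : ∑ j ∈ range (N + 1), c j ^ 2 = 1)
    (hbound : ∀ j ≤ N, σ j * |c j| ≤ 2 ^ j * D) :
    σ N ≤ 2 ^ (N + 1) / √3 * D := by
  rw [← pow_le_pow_iff_left₀ hσN (by positivity) two_ne_zero]
  calc σ N ^ 2 = ∑ j ∈ range (N + 1), (σ N * |c j|) ^ 2 := by
        simp_rw [mul_pow, sq_abs, ← mul_sum, hc, mul_one]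
    _ ≤ ∑ j ∈ range (N + 1), (2 ^ j * D) ^ 2 := by
        refine sum_le_sum fun j hj => ?_
        have hj : j ≤ N := Nat.lt_succ_iff.mp (mem_range.mp hj)
        exact pow_le_pow_left₀ (by positivity)
          ((mul_le_mul_of_nonneg_right (hanti j hj) (abs_nonneg _)).trans (hbound j hj)) 2
    _ = (4 ^ (N + 1) - 1) / 3 * D ^ 2 := by
        simp_rw [mul_pow, ← pow_mul, pow_mul', ← sum_mul]
        rw [geom_sum_eq (by norm_num : (2 : ℝ) ^ 2 ≠ 1)]; norm_num
    _ ≤ 4 ^ (N + 1) / 3 * D ^ 2 := by gcongr; linarith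
    _ = (2 ^ (N + 1) / √3 * D) ^ 2 := by
        rw [mul_pow, div_pow, Real.sq_sqrt (by norm_num : (0 : ℝ) ≤ 3), ← pow_mul, pow_mul']
        norm_num

section InnerProductSpace

variable {E : Type*} [NormedAddCommGroup E] [InnerProductSpace ℝ E]

lemma norm_sub_starProjection_le (K : Submodule ℝ E) [K.HasOrthogonalProjection] (g : E)
    {w : E} (hw : w ∈ K) : ‖g - K.starProjection g‖ ≤ ‖g - w‖ := by
  rw [Submodule.starProjection_minimal]
  exact ciInf_le ⟨0, by rintro x ⟨y, rfl⟩; positivity⟩ (⟨w, hw⟩ : K)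

lemma inner_sub_starProjection_self (K : Submodule ℝ E) [K.HasOrthogonalProjection] (v : E) :
    ⟪v, v - K.starProjection v⟫ = ‖v - K.starProjection v‖ ^ 2 := by
  have hperp : ⟪K.starProjection v, v - K.starProjection v⟫ = 0 :=
    Submodule.inner_right_of_mem_orthogonal (K.starProjection_apply_mem v)
      (K.sub_starProjection_mem_orthogonal v)
  rw [← real_inner_self_eq_norm_sq, inner_sub_left _ _ (v - _), hperp, sub_zero]

lemma abs_inner_le_norm_sub_of_mem_orthogonal {K : Submodule ℝ E} {u w : E} (hu : u ∈ Kᗮ)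
    (hu1 : ‖u‖ ≤ 1) (hw : w ∈ K) (g : E) : |⟪g, u⟫| ≤ ‖g - w‖ := by
  have hwu : ⟪w, u⟫ = 0 := Submodule.inner_right_of_mem_orthogonal hw hu
  calc |⟪g, u⟫| = |⟪g - w, u⟫| := by rw [inner_sub_left, hwu, sub_zero]
    _ ≤ ‖g - w‖ * ‖u‖ := abs_real_inner_le_norm _ _
    _ ≤ ‖g - w‖ := mul_le_of_le_one_right (norm_nonneg _) hu1

lemma abs_inner_le_infDist_of_mem_orthogonal {K : Submodule ℝ E} {u : E} (hu : u ∈ Kᗮ)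
    (hu1 : ‖u‖ ≤ 1) (g : E) : |⟪g, u⟫| ≤ infDist g K :=
  (le_infDist ⟨0, K.zero_mem⟩).2 fun w hw => by
    rw [dist_eq_norm]; exact abs_inner_le_norm_sub_of_mem_orthogonal hu hu1 hw g

lemma exists_sum_sq_eq_one_sum_smul_mem_orthogonal {ι : Type*} [Fintype ι] (b : ι → E)
    (W : Submodule ℝ E) [FiniteDimensional ℝ W] (hW : Module.finrank ℝ W < Fintype.card ι) :
    ∃ c : ι → ℝ, ∑ i, c i ^ 2 = 1 ∧ ∑ i, c i • b i ∈ Wᗮ := by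
  let T : (ι → ℝ) →ₗ[ℝ] W :=
    W.orthogonalProjectionOnto.toLinearMap ∘ₗ Fintype.linearCombination ℝ b
  obtain ⟨a, ha, ha0⟩ := (Submodule.ne_bot_iff _).mp <|
    T.ker_ne_bot_of_finrank_lt (by rwa [Module.finrank_fintype_fun_eq_card])
  have hperp : ∑ i, a i • b i ∈ Wᗮ := Submodule.orthogonalProjectionOnto_eq_zero_iff.mp ha
  set s := ∑ i, a i ^ 2
  have hs : 0 < s := by
    obtain ⟨i, hi⟩ := Function.ne_iff.mp ha0
    exact (sq_pos_of_ne_zero hi).trans_le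
      (single_le_sum (fun j _ => sq_nonneg (a j)) (mem_univ i))
  refine ⟨fun i => a i / √s, ?_, ?_⟩
  · simp_rw [div_pow, Real.sq_sqrt hs.le, ← sum_div]
    exact div_self hs.ne'
  · simp_rw [div_eq_inv_mul, mul_smul, ← smul_sum]
    exact Wᗮ.smul_mem _ hperp

lemma Orthonormal.exists_sum_sq_eq_one_abs_sum_mul_inner_le_infDist {N : ℕ} {b : ℕ → E}
    (hb : Orthonormal ℝ fun j : Fin (N + 1) => b j) (W : Submodule ℝ E) [FiniteDimensional ℝ W]
    (hW : Module.finrank ℝ W ≤ N) :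
    ∃ c : ℕ → ℝ, ∑ j ∈ range (N + 1), c j ^ 2 = 1 ∧
      ∀ g, |∑ j ∈ range (N + 1), c j * ⟪g, b j⟫| ≤ infDist g W := by
  obtain ⟨c, hc, hcW⟩ := exists_sum_sq_eq_one_sum_smul_mem_orthogonal (fun j : Fin (N + 1) => b j)
    W (by rw [Fintype.card_fin]; omega)
  have hnorm : ‖∑ j, c j • b j‖ = 1 := by
    have h := hb.inner_sum c c univ
    simp only [conj_trivial, ← sq, hc, real_inner_self_eq_norm_sq] at h
    exact (pow_eq_one_iff_of_nonneg (norm_nonneg _) two_ne_zero).mp h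
  refine ⟨fun j => c (Fin.ofNat (N + 1) j), ?_, fun g => ?_⟩
  · rw [← Fin.sum_univ_eq_sum_range (fun j => c (Fin.ofNat (N + 1) j) ^ 2)]
    simpa using hc
  · rw [← Fin.sum_univ_eq_sum_range (fun j => c (Fin.ofNat (N + 1) j) * ⟪g, b j⟫)]
    simpa [inner_sum, inner_smul_right] using
      abs_inner_le_infDist_of_mem_orthogonal hcW hnorm.le g

section Greedy

variable {F : Set E} (f : ℕ → E)

lemma greedySpace_mono : Monotone (greedySpace f) := fun _ _ h =>
  Submodule.span_mono (Set.image_mono (Set.Icc_subset_Icc_right h))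

lemma mem_greedySpace {i n : ℕ} (h1 : 1 ≤ i) (h2 : i ≤ n) : f i ∈ greedySpace f n :=
  Submodule.subset_span ⟨i, ⟨h1, h2⟩, rfl⟩

noncomputable def greedyResidual (j : ℕ) : E :=
  f (j + 1) - ((greedySpace f j).orthogonalProjectionOnto (f (j + 1)) : E)

/-- The Gram–Schmidt directions of the greedy snapshots; `0` where the residual vanishes. -/
noncomputable def greedyDirection (j : ℕ) : E :=
  ‖greedyResidual f j‖⁻¹ • greedyResidual f j

lemma greedyDirection_mem_orthogonal (j : ℕ) : greedyDirection f j ∈ (greedySpace f j)ᗮ :=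
  Submodule.smul_mem _ _ ((greedySpace f j).sub_starProjection_mem_orthogonal _)

lemma greedyDirection_mem_greedySpace (j : ℕ) : greedyDirection f j ∈ greedySpace f (j + 1) :=
  Submodule.smul_mem _ _ <| Submodule.sub_mem _ (mem_greedySpace f (by omega) le_rfl)
    (greedySpace_mono f j.le_succ (Submodule.coe_mem _))

lemma inner_greedyDirection_of_lt {i j : ℕ} (h : i < j) : ⟪f (i + 1), greedyDirection f j⟫ = 0 :=
  Submodule.inner_right_of_mem_orthogonal (mem_greedySpace f (by omega) h)
    (greedyDirection_mem_orthogonal f j)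

lemma inner_greedyDirection_self (j : ℕ) :
    ⟪f (j + 1), greedyDirection f j⟫ = ‖greedyResidual f j‖ := by
  rw [greedyDirection, real_inner_smul_right, greedyResidual, ← Submodule.starProjection_apply,
    inner_sub_starProjection_self]
  rcases eq_or_ne ‖f (j + 1) - (greedySpace f j).starProjection (f (j + 1))‖ 0 with h | h
  · simp [h]
  · field_simp

lemma abs_inner_greedyDirection_le (g : E) (j : ℕ) :
    |⟪g, greedyDirection f j⟫| ≤ ‖g - ((greedySpace f j).orthogonalProjectionOnto g : E)‖ := by
  refine abs_inner_le_norm_sub_of_mem_orthogonal (greedyDirection_mem_orthogonal f j) ?_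
    (Submodule.coe_mem _) g
  rw [greedyDirection, norm_smul, norm_inv, norm_norm]
  exact inv_mul_le_one_of_le₀ le_rfl (norm_nonneg _)

lemma orthonormal_greedyDirection {N : ℕ} (h : ∀ j ≤ N, greedyResidual f j ≠ 0) :
    Orthonormal ℝ fun j : Fin (N + 1) => greedyDirection f j := by
  refine ⟨fun j => norm_smul_inv_norm (h j (Nat.lt_succ_iff.mp j.isLt)), fun i j hij => ?_⟩
  have horth : ∀ {i j : ℕ}, i < j → ⟪greedyDirection f i, greedyDirection f j⟫ = 0 :=
    fun hlt => Submodule.inner_right_of_mem_orthogonal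
      (greedySpace_mono f hlt (greedyDirection_mem_greedySpace f _))
      (greedyDirection_mem_orthogonal f _)
  rcases Nat.lt_or_gt_of_ne (Fin.val_ne_of_ne hij) with hlt | hlt
  · exact horth hlt
  · exact (real_inner_comm _ _).trans (horth hlt)

lemma norm_sub_orthogonalProjectionOnto_le_greedyError (hF : Bornology.IsBounded F) {g : E}
    (hg : g ∈ F) (n : ℕ) :
    ‖g - ((greedySpace f n).orthogonalProjectionOnto g : E)‖ ≤ greedyError F f n := by
  obtain ⟨C, hC⟩ := hF.exists_norm_le
  refine le_ciSup_of_le ⟨C, ?_⟩ (⟨g, hg⟩ : F) le_rfl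
  rintro x ⟨y, rfl⟩
  calc ‖(y : E) - ((greedySpace f n).orthogonalProjectionOnto (y : E) : E)‖ ≤ ‖(y : E) - 0‖ :=
        norm_sub_starProjection_le _ _ (zero_mem _)
    _ ≤ C := by rw [sub_zero]; exact hC _ y.2

lemma greedyError_nonneg (hF : Bornology.IsBounded F) (hne : F.Nonempty) (n : ℕ) :
    0 ≤ greedyError F f n :=
  (norm_nonneg _).trans (norm_sub_orthogonalProjectionOnto_le_greedyError f hF hne.some_mem n)

lemma greedyError_antitone (hF : Bornology.IsBounded F) (hne : F.Nonempty) :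
    Antitone (greedyError F f) := fun m n h => by
  have : Nonempty F := hne.to_subtype
  refine ciSup_le fun g => (norm_sub_starProjection_le _ _ ?_).trans
    (norm_sub_orthogonalProjectionOnto_le_greedyError f hF g.2 m)
  exact greedySpace_mono f h (Submodule.coe_mem _)

end Greedy

theorem greedyError_le_of_forall_infDist_le {F : Set E} (hF : Bornology.IsBounded F)
    {f : ℕ → E} (hmem : ∀ n, 1 ≤ n → f n ∈ F)
    (hgreedy : ∀ n, ‖greedyResidual f n‖ = greedyError F f n) {N : ℕ} {W : Submodule ℝ E}
    [FiniteDimensional ℝ W] (hW : Module.finrank ℝ W ≤ N) {D : ℝ}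
    (hD : ∀ g ∈ F, infDist g W ≤ D) :
    greedyError F f N ≤ 2 ^ (N + 1) / √3 * D := by
  have hne : F.Nonempty := ⟨f 1, hmem 1 le_rfl⟩
  have hD0 : 0 ≤ D := infDist_nonneg.trans (hD _ hne.some_mem)
  have hanti j (hj : j ≤ N) := greedyError_antitone f hF hne hj
  rcases (greedyError_nonneg f hF hne N).eq_or_lt with hσ0 | hσ0
  · rw [← hσ0]; positivity
  have hb := orthonormal_greedyDirection f (N := N) fun j hj => by
    rw [← norm_pos_iff, hgreedy]; exact hσ0.trans_le (hanti j hj)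
  obtain ⟨c, hc, hcW⟩ := hb.exists_sum_sq_eq_one_abs_sum_mul_inner_le_infDist W hW
  refine le_two_pow_div_sqrt_three_mul hσ0.le hD0 hanti hc <|
    mul_abs_le_two_pow_mul_of_lowerTriangular (a := fun i j => ⟪f (i + 1), greedyDirection f j⟫)
      (fun i _ => by rw [inner_greedyDirection_self, hgreedy]) (fun i _ j _ => ?_)
      (fun i j => inner_greedyDirection_of_lt f)
      (fun i _ => (hcW _).trans (hD _ (hmem _ (by omega))))
  exact (abs_inner_greedyDirection_le f _ j).trans
    (norm_sub_orthogonalProjectionOnto_le_greedyError f hF (hmem _ (by omega)) j)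

end InnerProductSpace

theorem greedyError_le_kolmogorovWidth_general
    (F : Set V) (hF : IsCompact F) (f : ℕ → V)
    (hmem : ∀ n : ℕ, 1 ≤ n → f n ∈ F)
    (hgreedy : ∀ n : ℕ,
      ‖f (n + 1) - ((greedySpace f n).orthogonalProjectionOnto (f (n + 1)) : V)‖ =
        greedyError F f n)
    (N : ℕ) :
    greedyError F f N ≤ (2 ^ (N + 1) / Real.sqrt 3) * kolmogorovWidth F N := by
  have hK : (0 : ℝ) < 2 ^ (N + 1) / √3 := by positivity
  obtain ⟨C, hC⟩ := hF.isBounded.exists_norm_le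
  have hwidth : {r : ℝ | ∃ W : Submodule ℝ V, Module.rank ℝ W ≤ N ∧
      ∀ g ∈ F, infDist g (W : Set V) ≤ r}.Nonempty :=
    ⟨C, ⊥, by simp, fun g hg => by simpa using hC g hg⟩
  rw [← div_le_iff₀' hK, kolmogorovWidth]
  refine le_csInf hwidth fun r ⟨W, hWrank, hWr⟩ => ?_
  have : FiniteDimensional ℝ W :=
    Module.rank_lt_aleph0_iff.mp (hWrank.trans_lt Cardinal.natCast_lt_aleph0)
  rw [div_le_iff₀' hK]
  exact greedyError_le_of_forall_infDist_le hF.isBounded hmem hgreedy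
    (Module.finrank_le_of_rank_le hWrank) hWr

/-- **Greedy versus Kolmogorov widths** (Binev–Cohen–Dahmen–DeVore–Petrova–Wojtaszczyk):
for a compact set `F` in a Hilbert space and a strong greedy sequence `(f_n)_{n ≥ 1}` in `F`,
`σ_N(F) ≤ (2^{N+1}/√3) d_N(F)` for every `N ≥ 1`. -/
theorem greedyError_le_kolmogorovWidth
    (F : Set V) (hF : IsCompact F) (f : ℕ → V)
    (hmem : ∀ n : ℕ, 1 ≤ n → f n ∈ F)
    (hgreedy : ∀ n : ℕ,
      ‖f (n + 1) - ((greedySpace f n).orthogonalProjectionOnto (f (n + 1)) : V)‖ =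
        greedyError F f n)
    (N : ℕ) (hN : 1 ≤ N) :
    greedyError F f N ≤ (2 ^ (N + 1) / Real.sqrt 3) * kolmogorovWidth F N :=
  greedyError_le_kolmogorovWidth_general F hF f hmem hgreedy N
end

section
/- Let d ≥ 1 and let h : Fin d → ℝ satisfy h_j > 0 for all j. Let j₀ be an index attaining the maximum of h, i.e. h_{j₀} = max_j h_j, and define h' : Fin d → ℝ by h'_{j₀} = h_{j₀}/2 and h'_j = h_j for j ≠ j₀ (bisection along the longest edge). Then the aspect-ratio quantity r(h) := min over all pairs (i, j) of h_i/h_j satisfies r(h') ≥ min(r(h), 1/2). -/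
/-- **Aspect-ratio invariance of longest-edge bisection.** Let `h = (h_1, …, h_d)` be the
positive side lengths of a `d`-dimensional box and let `j₀` attain the maximum of `h`.
If `h'` is obtained from `h` by halving the longest side `h_{j₀}` (bisection along the
longest edge), then the aspect ratio `r(h) = min_{i,j} h_i/h_j` satisfies
`r(h') ≥ min(r(h), 1/2)`. -/
theorem aspect_ratio_bisection (d : ℕ) (hd : 1 ≤ d) (h : Fin d → ℝ)
    (hpos : ∀ j, 0 < h j) (j₀ : Fin d) (hmax : ∀ j, h j ≤ h j₀) :
    min (⨅ p : Fin d × Fin d, h p.1 / h p.2) (1 / 2) ≤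
      ⨅ p : Fin d × Fin d,
        Function.update h j₀ (h j₀ / 2) p.1 / Function.update h j₀ (h j₀ / 2) p.2 := by
  have : Nonempty (Fin d) := ⟨⟨0, hd⟩⟩
  have hinf : ∀ p : Fin d × Fin d,
      (⨅ q : Fin d × Fin d, h q.1 / h q.2) ≤ h p.1 / h p.2 := fun p =>
    ciInf_le (Set.Finite.bddBelow (Set.finite_range _)) p
  refine le_ciInf fun p => ?_
  rcases eq_or_ne p.1 j₀ with h1 | h1 <;> rcases eq_or_ne p.2 j₀ with h2 | h2
  · rw [h1, h2, Function.update_self]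
    have : h j₀ / 2 / (h j₀ / 2) = 1 := div_self (by have := hpos j₀; positivity)
    rw [this]
    exact le_trans (min_le_right _ _) (by norm_num)
  · rw [h1, Function.update_self, Function.update_of_ne h2]
    refine le_trans (min_le_right _ _) ?_
    rw [div_le_div_iff₀ (by norm_num) (hpos p.2)]
    have := hmax p.2
    nlinarith [hpos p.2, hpos j₀]
  · rw [h2, Function.update_self, Function.update_of_ne h1]
    refine le_trans (min_le_left _ _) (le_trans (hinf (p.1, j₀)) ?_)
    rw [div_le_div_iff₀ (hpos j₀) (by have := hpos j₀; linarith)]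
    nlinarith [hpos p.1, hpos j₀]
  · rw [Function.update_of_ne h1, Function.update_of_ne h2]
    exact le_trans (min_le_left _ _) (hinf p)
end

section
/- Let V be a complex (or real) Banach space, d ≥ 1 an integer, ζ > 1 and C ≥ 0 real numbers. Let (t_ν)_{ν : Fin d → ℕ} be a family in V with ‖t_ν‖ ≤ C · ζ^{−|ν|} for every multi-index ν. Then for every μ ∈ [−1,1]^d the family (t_ν · μ^ν)_{ν} is summable in V, and for every integer m ≥ 0 and every set Λ of multi-indices containing all ν with |ν| < m, one has ‖Σ_{ν ∉ Λ} t_ν μ^ν‖ ≤ C · Σ_{n=m}^∞ C(n + d − 1, d − 1) ζ^{−n}. -/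
/-!
Each term satisfies `‖μ^ν • t_ν‖ ≤ C r^|ν|` with `r = ζ⁻¹ < 1`. Grouping multi-indices by their
total degree, the shell `|ν| = n` has `C(n + d - 1, d - 1)` elements (stars and bars, through
`Sym`), so `∑_ν C r^|ν|` is the binomial series `C ∑_n C(n + d - 1, d - 1) r^n`, which converges.
The indices outside `Λ` have degree at least `m`, so the tail is dominated by the part of this
series with `n ≥ m`.
-/

open Finset

section GradedSums

variable {α : Type*} (f : α → ℕ)

def tailSigmaEquiv (m : ℕ) : (Σ n : ℕ, {x // f x = m + n}) ≃ {x // m ≤ f x} where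
  toFun p := ⟨p.2.1, (Nat.le_add_right m p.1).trans_eq p.2.2.symm⟩
  invFun x := ⟨f x.1 - m, x.1, by have := x.2; omega⟩
  left_inv := fun ⟨n, x, hx⟩ => by
    obtain rfl : f x - m = n := by omega
    rfl
  right_inv _ := rfl

theorem summable_comp_iff_summable_natCard_mul [∀ n, Finite {x // f x = n}] {w : ℕ → ℝ}
    (hw : 0 ≤ w) :
    Summable (w ∘ f) ↔ Summable fun n => Nat.card {x // f x = n} * w n := by
  have hfiber (n : ℕ) (x : {x // f x = n}) : w (f x) = w n := by rw [x.2]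
  rw [← (Equiv.sigmaFiberEquiv f).summable_iff (f := w ∘ f),
    summable_sigma_of_nonneg (f := (w ∘ f) ∘ _) fun _ => hw _]
  simp only [Function.comp_apply, Equiv.sigmaFiberEquiv_apply, hfiber, tsum_const, nsmul_eq_mul]
  exact and_iff_right fun _ => .of_finite

theorem tsum_tail_comp_eq_tsum_natCard_nsmul {E : Type*} [NormedAddCommGroup E] [CompleteSpace E]
    (m : ℕ) {w : ℕ → E} (hw : Summable (w ∘ f)) :
    ∑' x : {x // m ≤ f x}, w (f x) = ∑' n, Nat.card {x // f x = m + n} • w (m + n) := by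
  have hfiber (n : ℕ) (x : {x // f x = m + n}) : w (f x) = w (m + n) := by rw [x.2]
  have hsigma : Summable fun p => w (f (tailSigmaEquiv f m p)) :=
    (tailSigmaEquiv f m).summable_iff.mpr (hw.subtype {x | m ≤ f x})
  rw [← (tailSigmaEquiv f m).tsum_eq, hsigma.tsum_sigma]
  simp only [tailSigmaEquiv, Equiv.coe_fn_mk, hfiber, tsum_const]

end GradedSums

theorem Summable.tsum_subtype_mono {α : Type*} {g : α → ℝ} (hg : Summable g) (h0 : 0 ≤ g)
    {s t : Set α} (hst : s ⊆ t) : ∑' x : s, g x ≤ ∑' x : t, g x :=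
  (hg.subtype s).tsum_le_tsum_of_inj (Set.inclusion hst) (Set.inclusion_injective hst)
    (fun x _ => h0 x) (fun _ => le_rfl) (hg.subtype t)

instance {ι : Type*} [Fintype ι] (n : ℕ) : Finite {ν : ι → ℕ // ∑ i, ν i = n} := by
  classical
  exact .of_equiv _ (Sym.equivNatSumOfFintype ι n)

theorem natCard_tuple_sum_eq_choose {ι : Type*} [Fintype ι] (n : ℕ) :
    Nat.card {ν : ι → ℕ // ∑ i, ν i = n} = (Fintype.card ι + n - 1).choose n := by
  classical
  rw [← Nat.card_congr (Sym.equivNatSumOfFintype ι n), Sym.natCard_sym_eq_choose,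
    Nat.card_eq_fintype_card]

theorem abs_prod_pow_le_one {ι : Type*} [Fintype ι] {μ : ι → ℝ}
    (hμ : ∀ i, μ i ∈ Set.Icc (-1 : ℝ) 1) (ν : ι → ℕ) : |∏ i, μ i ^ ν i| ≤ 1 := by
  rw [abs_prod]
  refine prod_le_one (fun _ _ => abs_nonneg _) fun i _ => ?_
  rw [abs_pow]
  exact pow_le_one₀ (abs_nonneg _) (abs_le.mpr (hμ i))

/-- **Truncation error of the Taylor expansion.** Let `(t_ν)` be a family in a Banach space
with `‖t_ν‖ ≤ C ζ^{-|ν|}` for all multi-indices `ν ∈ ℕ^d`, where `ζ > 1`. Then for every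
`μ ∈ [-1,1]^d` the family `(μ^ν • t_ν)` is summable, and for every `m ≥ 0` and every set `Λ`
of multi-indices containing all `ν` with `|ν| < m`, the tail satisfies
`‖∑_{ν ∉ Λ} μ^ν • t_ν‖ ≤ C ∑_{n=m}^∞ C(n+d-1, d-1) ζ^{-n}` (the series on the right being
indexed here by `n = m + k`, `k ∈ ℕ`). -/
theorem taylor_truncation_error
    {V : Type*} [NormedAddCommGroup V] [NormedSpace ℝ V] [CompleteSpace V]
    (d : ℕ) (hd : 1 ≤ d) (ζ C : ℝ) (hζ : 1 < ζ) (hC : 0 ≤ C)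
    (t : (Fin d → ℕ) → V)
    (ht : ∀ ν : Fin d → ℕ, ‖t ν‖ ≤ C * ζ ^ (-(∑ j, ν j : ℤ)))
    (μ : Fin d → ℝ) (hμ : ∀ j, μ j ∈ Set.Icc (-1 : ℝ) 1) :
    Summable (fun ν : Fin d → ℕ => (∏ j, μ j ^ ν j) • t ν) ∧
    ∀ (m : ℕ) (Λ : Set (Fin d → ℕ)), {ν : Fin d → ℕ | ∑ j, ν j < m} ⊆ Λ →
      ‖∑' ν : {ν : Fin d → ℕ // ν ∉ Λ}, (∏ j, μ j ^ ν.1 j) • t ν.1‖ ≤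
        C * ∑' n : ℕ, ((m + n + d - 1).choose (d - 1) : ℝ) * ζ ^ (-(m + n : ℤ)) := by
  set r := ζ⁻¹
  have hr : ‖r‖ < 1 := by
    rw [Real.norm_of_nonneg (by positivity)]
    exact inv_lt_one_of_one_lt₀ hζ
  have hzpow (n : ℕ) : ζ ^ (-(n : ℤ)) = r ^ n := by rw [zpow_neg, zpow_natCast, inv_pow]
  have hcard (n : ℕ) :
      Nat.card {ν : Fin d → ℕ // ∑ j, ν j = n} = (n + (d - 1)).choose (d - 1) := by
    rw [natCard_tuple_sum_eq_choose, Fintype.card_fin, show d + n - 1 = n + (d - 1) by omega,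
      Nat.choose_symm_add]
  set g : (Fin d → ℕ) → ℝ := fun ν => C * r ^ ∑ j, ν j
  have hbound (ν : Fin d → ℕ) : ‖(∏ j, μ j ^ ν j) • t ν‖ ≤ g ν := by
    calc ‖(∏ j, μ j ^ ν j) • t ν‖ = |∏ j, μ j ^ ν j| * ‖t ν‖ := by
          rw [norm_smul, Real.norm_eq_abs]
      _ ≤ 1 * (C * ζ ^ (-(∑ j, ν j : ℤ))) :=
          mul_le_mul (abs_prod_pow_le_one hμ ν) (ht ν) (norm_nonneg _) zero_le_one
      _ = g ν := by rw [one_mul, ← Nat.cast_sum, hzpow]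
  have hg : Summable g := by
    refine .mul_left C ((summable_comp_iff_summable_natCard_mul (w := (r ^ ·)) _
      fun n => pow_nonneg (by positivity) n).mpr ?_)
    simpa only [hcard] using summable_choose_mul_geometric_of_norm_lt_one (d - 1) hr
  refine ⟨.of_norm_bounded hg hbound, fun m Λ hΛ => ?_⟩
  have htail : Λᶜ ⊆ {ν | m ≤ ∑ j, ν j} := fun ν hν =>
    Set.mem_ofPred.mpr (le_of_not_gt fun h => hν (hΛ h))
  calc ‖∑' ν : {ν : Fin d → ℕ // ν ∉ Λ}, (∏ j, μ j ^ ν.1 j) • t ν.1‖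
      ≤ ∑' ν : ↥Λᶜ, g ν := tsum_of_norm_bounded (hg.subtype _).hasSum fun ν => hbound ν
    _ ≤ ∑' ν : {ν : Fin d → ℕ | m ≤ ∑ j, ν j}, g ν :=
        hg.tsum_subtype_mono (fun ν => by positivity) htail
    _ = ∑' n, Nat.card {ν : Fin d → ℕ // ∑ j, ν j = m + n} • (C * r ^ (m + n)) :=
        tsum_tail_comp_eq_tsum_natCard_nsmul _ m (w := fun n => C * r ^ n) hg
    _ = _ := by
        rw [← tsum_mul_left]
        refine tsum_congr fun n => ?_
        rw [hcard, nsmul_eq_mul, ← Nat.cast_add, hzpow, Nat.add_sub_assoc hd]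
        ring
end
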